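/- arXiv:2405.18962 — 5 statements merged into one kernel-verified Lean document; each statement's English description precedes it below -/
import Mathlib

section
/- Suppose matrices H, G, Φ, Ψ, J satisfy H = Φ J and G = Ψ J with rowspace(Ψ) ⊆ rowspace(Φ). Then rank H − rank G ≤ rank Φ − rank Ψ. Equivalently: rank(ΦJ) − rank(ΨJ) ≤ rank Φ − rank Ψ whenever the row space of Ψ is contained in that of Φ. -/
/-!
Multiplying on the right by `J` maps the row space `R` of a matrix onto the row space of the
product, so by rank–nullity `rank (M * J) = dim R - dim (R ⊓ ker J)`, with `J` acting on row
vectors. The correction term `dim (R ⊓ ker J)` is monotone in `R`, which gives the inequality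
for `rowSpace Ψ ≤ rowSpace Φ`.
-/

open Matrix
noncomputable section

/-- The row space of a matrix: the span of its rows. -/
def rowSpace {ι κ : Type*} (M : Matrix ι κ ℝ) : Submodule ℝ (κ → ℝ) :=
  Submodule.span ℝ (Set.range fun i => M i)

open Module

theorem Submodule.finrank_map_add_finrank_inf_ker {K V W : Type*} [DivisionRing K]
    [AddCommGroup V] [Module K V] [AddCommGroup W] [Module K W]
    (f : V →ₗ[K] W) (P : Submodule K V) [FiniteDimensional K P] :
    finrank K (P.map f) + finrank K ↥(P ⊓ LinearMap.ker f) = finrank K P := by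
  have h := (f.domRestrict P).finrank_range_add_finrank_ker
  rwa [LinearMap.range_domRestrict, LinearMap.ker_domRestrict,
    (Submodule.equivMapOfInjective _ P.injective_subtype _).finrank_eq,
    Submodule.map_comap_subtype] at h

theorem Submodule.finrank_map_sub_finrank_map_le {K V W : Type*} [DivisionRing K]
    [AddCommGroup V] [Module K V] [AddCommGroup W] [Module K W] [FiniteDimensional K V]
    (f : V →ₗ[K] W) {P Q : Submodule K V} (hPQ : P ≤ Q) :
    (finrank K (Q.map f) : ℤ) - finrank K (P.map f) ≤ finrank K Q - finrank K P := by
  have hP := P.finrank_map_add_finrank_inf_ker f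
  have hQ := Q.finrank_map_add_finrank_inf_ker f
  have hker := Submodule.finrank_mono (inf_le_inf_right (LinearMap.ker f) hPQ)
  omega

theorem rowSpace_mul {ι κ μ : Type*} [Fintype κ] (M : Matrix ι κ ℝ) (N : Matrix κ μ ℝ) :
    rowSpace (M * N) = (rowSpace M).map N.vecMulLinear := by
  rw [rowSpace, rowSpace, Submodule.map_span, ← Set.range_comp]
  rfl

theorem rank_eq_finrank_rowSpace {ι κ : Type*} [Finite ι] [Fintype κ] (M : Matrix ι κ ℝ) :
    M.rank = finrank ℝ (rowSpace M) :=
  M.rank_eq_finrank_span_row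

theorem stmt6 {a b c d : ℕ}
    (Φ : Matrix (Fin a) (Fin c) ℝ) (Ψ : Matrix (Fin b) (Fin c) ℝ)
    (J : Matrix (Fin c) (Fin d) ℝ)
    (h : rowSpace Ψ ≤ rowSpace Φ) :
    ((Φ * J).rank : ℤ) - ((Ψ * J).rank : ℤ) ≤ (Φ.rank : ℤ) - (Ψ.rank : ℤ) := by
  rw [rank_eq_finrank_rowSpace, rank_eq_finrank_rowSpace, rank_eq_finrank_rowSpace Φ,
    rank_eq_finrank_rowSpace Ψ, rowSpace_mul, rowSpace_mul]
  exact Submodule.finrank_map_sub_finrank_map_le J.vecMulLinear h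
end
end

section
/- Let (u,y) be input-output data of length T explained by a state-space system (A,B,C,D) with state sequence x, i.e., x_{t+1} = A x_t + B u_t and y_t = C x_t + D u_t for t ∈ [0,T−1]. For k ∈ [0,T−1] define J_k(x) = [x_{[0,T−k−1]} ; H_k(u)] (state row block stacked over the depth-(k+1) input Hankel matrix). If (C,A) is observable and k ≥ max(ℓ(C,A)−1, 0), then rank J_k(x) = rank H_k, where H_k is the depth-(k+1) Hankel matrix of the combined data (u;y). -/
open Matrix
noncomputable section

/-- `obsMat A C k` is the observability matrix Ω_k, the stack of C, CA, ..., CA^k. -/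
def obsMat {ι : Type*} [Fintype ι] [DecidableEq ι] {p : ℕ}
    (A : Matrix ι ι ℝ) (C : Matrix (Fin p) ι ℝ) (k : ℕ) :
    Matrix (Fin (k + 1) × Fin p) ι ℝ :=
  Matrix.of fun ir j => (C * A ^ (ir.1 : ℕ)) ir.2 j

/-- `obsRank A C (k+1) = rank Ω_k`; `obsRank A C 0 = rank Ω_{-1} = 0` (void matrix). -/
def obsRank {ι : Type*} [Fintype ι] [DecidableEq ι] {p : ℕ}
    (A : Matrix ι ι ℝ) (C : Matrix (Fin p) ι ℝ) : ℕ → ℕ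
  | 0 => 0
  | k + 1 => (obsMat A C k).rank

/-- ρ_k = rank Ω_k − rank Ω_{k-1}. -/
def rho {ι : Type*} [Fintype ι] [DecidableEq ι] {p : ℕ}
    (A : Matrix ι ι ℝ) (C : Matrix (Fin p) ι ℝ) (k : ℕ) : ℕ :=
  obsRank A C (k + 1) - obsRank A C k

/-- The lag ℓ(C,A): the smallest k ≥ 0 with rank Ω_k = rank Ω_{k-1}. -/
def lag {ι : Type*} [Fintype ι] [DecidableEq ι] {p : ℕ}
    (A : Matrix ι ι ℝ) (C : Matrix (Fin p) ι ℝ) : ℕ :=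
  sInf {k | obsRank A C (k + 1) = obsRank A C k}

/-- (C,A) is observable iff rank Ω_{n-1} = n where n is the state dimension. -/
def Observable {ι : Type*} [Fintype ι] [DecidableEq ι] {p : ℕ}
    (A : Matrix ι ι ℝ) (C : Matrix (Fin p) ι ℝ) : Prop :=
  obsRank A C (Fintype.card ι) = Fintype.card ι

/-- Block Hankel matrix of depth k+1 built from f_0, ..., f_{T-1}. -/
def hankel {r T : ℕ} (f : Fin T → Fin r → ℝ) (k : ℕ) :
    Matrix (Fin (k + 1) × Fin r) (Fin (T - k)) ℝ :=
  Matrix.of fun ia j =>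
    f ⟨(ia.1 : ℕ) + (j : ℕ), by have h1 := ia.1.isLt; have h2 := j.isLt; omega⟩ ia.2

/-- H_k : Hankel matrix of depth k+1 of the stacked data (u; y). -/
def Hmat {m p T : ℕ} (u : Fin T → Fin m → ℝ) (y : Fin T → Fin p → ℝ) (k : ℕ) :
    Matrix ((Fin (k + 1) × Fin m) ⊕ (Fin (k + 1) × Fin p)) (Fin (T - k)) ℝ :=
  Matrix.fromRows (hankel u k) (hankel y k)

/-- G_k : H_k with its last p rows (the y_k block) deleted. -/
def Gmat {m p T : ℕ} (u : Fin T → Fin m → ℝ) (y : Fin T → Fin p → ℝ) (k : ℕ) :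
    Matrix ((Fin (k + 1) × Fin m) ⊕ (Fin k × Fin p)) (Fin (T - k)) ℝ :=
  Matrix.fromRows (hankel u k)
    (Matrix.of fun ia j =>
      y ⟨(ia.1 : ℕ) + (j : ℕ), by have h1 := ia.1.isLt; have h2 := j.isLt; omega⟩ ia.2)

/-- δ_k = rank H_k − rank G_k. -/
def delta {m p T : ℕ} (u : Fin T → Fin m → ℝ) (y : Fin T → Fin p → ℝ) (k : ℕ) : ℕ :=
  (Hmat u y k).rank - (Gmat u y k).rank

/-- (A,B,C,D) explains the data (u,y) with state sequence x. -/
def Explains {ι : Type*} [Fintype ι] {m p T : ℕ}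
    (A : Matrix ι ι ℝ) (B : Matrix ι (Fin m) ℝ)
    (C : Matrix (Fin p) ι ℝ) (D : Matrix (Fin p) (Fin m) ℝ)
    (u : Fin T → Fin m → ℝ) (y : Fin T → Fin p → ℝ) (x : Fin (T + 1) → ι → ℝ) : Prop :=
  ∀ t : Fin T,
    x t.succ = A.mulVec (x t.castSucc) + B.mulVec (u t) ∧
    y t = C.mulVec (x t.castSucc) + D.mulVec (u t)

/-- J_k(x): the state row block x_{[0,T-k-1]} stacked over the depth-(k+1) input Hankel matrix. -/
def Jmat {ι : Type*} {m T : ℕ} (u : Fin T → Fin m → ℝ) (x : Fin (T + 1) → ι → ℝ) (k : ℕ) :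
    Matrix (ι ⊕ (Fin (k + 1) × Fin m)) (Fin (T - k)) ℝ :=
  Matrix.fromRows (Matrix.of fun i j => x ⟨(j : ℕ), by have := j.isLt; omega⟩ i) (hankel u k)

/-!
`H_k = Φ_k J_k(x)` with `Φ_k = [[0, I], [Ω_k, Θ_k]]`: the input rows of `H_k` are those of
`J_k(x)`, and unrolling the state recursion writes each output `y_{t+i}` as `C A^i x_t` plus a
combination of the Markov parameters with `u_t, …, u_{t+i}`. So it suffices that `Φ_k` is
injective, i.e. that `Ω_k` is. The kernels `K_j` of `Ω_{j-1}` satisfy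
`K_{j+1} = ker C ∩ A⁻¹ K_j`; hence once `K_{j+1} = K_j` the chain is constant, which happens at
the lag, and observability makes the eventual value trivial.
-/

open Module Finset

namespace Matrix

variable {R : Type*} [CommRing R] {l m n o : Type*} [Fintype m] [Fintype n]

theorem rank_mul_eq_right_of_injective (M : Matrix l m R) (N : Matrix m n R)
    (hM : Function.Injective M.mulVecLin) : (M * N).rank = N.rank := by
  rw [rank, rank, mulVecLin_mul, LinearMap.range_comp]
  exact (Submodule.equivMapOfInjective _ hM _).finrank_eq.symm

theorem mulVecLin_fromBlocks_zero_one_injective [Fintype o] [DecidableEq o]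
    (M : Matrix l m R) (N : Matrix l o R) (hM : Function.Injective M.mulVecLin) :
    Function.Injective (fromBlocks 0 1 M N : Matrix (o ⊕ l) (m ⊕ o) R).mulVecLin := by
  rw [← LinearMap.ker_eq_bot, Submodule.eq_bot_iff]
  intro v hv
  obtain ⟨v₁, v₂, rfl⟩ : ∃ (v₁ : m → R) (v₂ : o → R), v = Sum.elim v₁ v₂ :=
    ⟨_, _, (Sum.elim_comp_inl_inr v).symm⟩
  rw [LinearMap.mem_ker, mulVecLin_apply, fromBlocks_mulVec, Sum.elim_comp_inl, Sum.elim_comp_inr,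
    zero_mulVec, one_mulVec, zero_add, ← Sum.elim_zero_zero, Sum.elim_eq_iff] at hv
  obtain ⟨rfl, hv₁⟩ := hv
  rw [mulVec_zero, add_zero, ← mulVecLin_apply, ← LinearMap.map_zero M.mulVecLin] at hv₁
  rw [hM hv₁, Sum.elim_zero_zero]

end Matrix

section Observability

variable {ι : Type*} [Fintype ι] [DecidableEq ι] {p : ℕ}
  (A : Matrix ι ι ℝ) (C : Matrix (Fin p) ι ℝ)

/-- The states that produce zero output during the first `j` steps: `obsKernel A C (k + 1)` is the
kernel of `Ω_k`, and `obsKernel A C 0 = ⊤` matches the convention `obsRank A C 0 = 0`. -/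
def obsKernel (j : ℕ) : Submodule ℝ (ι → ℝ) :=
  ⨅ i < j, LinearMap.ker (C * A ^ i).mulVecLin

variable {A C}

theorem mem_obsKernel {j : ℕ} {v : ι → ℝ} :
    v ∈ obsKernel A C j ↔ ∀ i < j, (C * A ^ i) *ᵥ v = 0 := by
  simp [obsKernel]

theorem mem_obsKernel_succ {j : ℕ} {v : ι → ℝ} :
    v ∈ obsKernel A C (j + 1) ↔ C *ᵥ v = 0 ∧ A *ᵥ v ∈ obsKernel A C j := by
  simp only [mem_obsKernel, Nat.forall_lt_succ_left, pow_zero, Matrix.mul_one, pow_succ,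
    ← Matrix.mul_assoc, mulVec_mulVec]

variable (A C)

theorem obsKernel_antitone : Antitone (obsKernel A C) :=
  antitone_nat_of_succ_le fun _ _ hv =>
    mem_obsKernel.2 fun i hi => mem_obsKernel.1 hv i (Nat.lt_succ_of_lt hi)

theorem ker_obsMat (k : ℕ) : LinearMap.ker (obsMat A C k).mulVecLin = obsKernel A C (k + 1) := by
  ext v
  simp only [LinearMap.mem_ker, mulVecLin_apply, mem_obsKernel, funext_iff, Prod.forall,
    Fin.forall_iff]
  simp [obsMat, mulVec, dotProduct]

theorem obsRank_add_finrank_obsKernel (j : ℕ) :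
    obsRank A C j + finrank ℝ (obsKernel A C j) = Fintype.card ι := by
  cases j with
  | zero =>
    have hK : obsKernel A C 0 = ⊤ := by ext; simp [mem_obsKernel]
    rw [obsRank, hK, finrank_top, finrank_fintype_fun_eq_card, zero_add]
  | succ k =>
    rw [obsRank, ← ker_obsMat, rank, LinearMap.finrank_range_add_finrank_ker,
      finrank_fintype_fun_eq_card]

theorem obsRank_succ_eq_iff (j : ℕ) :
    obsRank A C (j + 1) = obsRank A C j ↔ obsKernel A C (j + 1) = obsKernel A C j := by
  have h := obsRank_add_finrank_obsKernel A C j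
  have h' := obsRank_add_finrank_obsKernel A C (j + 1)
  constructor
  · exact fun hr => Submodule.eq_of_le_of_finrank_eq (obsKernel_antitone A C j.le_succ) (by omega)
  · intro hK
    rw [hK] at h'
    omega

variable {A C}

theorem obsKernel_succ_succ {j : ℕ} (h : obsKernel A C (j + 1) = obsKernel A C j) :
    obsKernel A C (j + 2) = obsKernel A C (j + 1) := by
  ext v
  calc v ∈ obsKernel A C (j + 2)
      ↔ C *ᵥ v = 0 ∧ A *ᵥ v ∈ obsKernel A C (j + 1) := mem_obsKernel_succ
    _ ↔ C *ᵥ v = 0 ∧ A *ᵥ v ∈ obsKernel A C j := by rw [h]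
    _ ↔ v ∈ obsKernel A C (j + 1) := mem_obsKernel_succ.symm

theorem obsKernel_eq_of_succ_eq {j : ℕ} (h : obsKernel A C (j + 1) = obsKernel A C j) {i : ℕ}
    (hi : j ≤ i) : obsKernel A C i = obsKernel A C j := by
  have hstep : ∀ i, j ≤ i → obsKernel A C (i + 1) = obsKernel A C i :=
    Nat.le_induction h fun _ _ => obsKernel_succ_succ
  induction i, hi using Nat.le_induction with
  | base => rfl
  | succ i hi ih => exact (hstep i hi).trans ih

variable (A C)

theorem obsKernel_lag_succ : obsKernel A C (lag A C + 1) = obsKernel A C (lag A C) := by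
  obtain ⟨n, hn⟩ := IsArtinian.monotone_stabilizes
    (⟨fun j => OrderDual.toDual (obsKernel A C j), (obsKernel_antitone A C).dual_right⟩ :
      ℕ →o (Submodule ℝ (ι → ℝ))ᵒᵈ)
  have hne : {j | obsRank A C (j + 1) = obsRank A C j}.Nonempty :=
    ⟨n, (obsRank_succ_eq_iff A C n).2 (hn (n + 1) n.le_succ).symm⟩
  exact (obsRank_succ_eq_iff A C _).1 (Nat.sInf_mem hne)

variable {A C}

theorem obsKernel_eq_bot (hobs : Observable A C) {j : ℕ} (hj : lag A C ≤ j) :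
    obsKernel A C j = ⊥ := by
  have hstab : ∀ i, lag A C ≤ i → obsKernel A C i = obsKernel A C (lag A C) :=
    fun _ => obsKernel_eq_of_succ_eq (obsKernel_lag_succ A C)
  have hn : obsKernel A C (Fintype.card ι) = ⊥ := by
    have := obsRank_add_finrank_obsKernel A C (Fintype.card ι)
    rw [hobs] at this
    exact Submodule.finrank_eq_zero.1 (by omega)
  rw [eq_bot_iff, ← hn, hstab j hj, ← hstab _ (le_max_left _ (Fintype.card ι))]
  exact obsKernel_antitone A C (le_max_right _ _)

theorem obsMat_mulVecLin_injective (hobs : Observable A C) {k : ℕ} (hk : lag A C ≤ k + 1) :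
    Function.Injective (obsMat A C k).mulVecLin := by
  rw [← LinearMap.ker_eq_bot, ker_obsMat]
  exact obsKernel_eq_bot hobs hk

end Observability

section Dynamics

variable {ι : Type*} [Fintype ι] [DecidableEq ι] {m p : ℕ}
  (A : Matrix ι ι ℝ) (B : Matrix ι (Fin m) ℝ)
  (C : Matrix (Fin p) ι ℝ) (D : Matrix (Fin p) (Fin m) ℝ)

def markov : ℕ → Matrix (Fin p) (Fin m) ℝ
  | 0 => D
  | i + 1 => C * A ^ i * B

variable {A B C D}

theorem state_eq_sum {N : ℕ} {xs : ℕ → ι → ℝ} {us : ℕ → Fin m → ℝ}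
    (hx : ∀ t < N, xs (t + 1) = A *ᵥ xs t + B *ᵥ us t) {i j : ℕ} (h : j + i ≤ N) :
    xs (j + i) = A ^ i *ᵥ xs j + ∑ s ∈ range i, (A ^ (i - 1 - s) * B) *ᵥ us (j + s) := by
  induction i with
  | zero => simp
  | succ i ih =>
    have hA : A *ᵥ ∑ s ∈ range i, (A ^ (i - 1 - s) * B) *ᵥ us (j + s)
        = ∑ s ∈ range i, (A ^ (i - s) * B) *ᵥ us (j + s) := by
      rw [mulVec_sum]
      refine sum_congr rfl fun s hs => ?_
      have hsi := mem_range.1 hs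
      rw [mulVec_mulVec, ← Matrix.mul_assoc, ← pow_succ', show i - 1 - s + 1 = i - s by omega]
    rw [← add_assoc, hx _ (by omega), ih (by omega), mulVec_add, mulVec_mulVec, ← pow_succ',
      hA, sum_range_succ, add_assoc]
    simp only [Nat.add_sub_cancel, Nat.sub_self, pow_zero, Matrix.one_mul]

theorem output_eq_sum {N : ℕ} {xs : ℕ → ι → ℝ} {us : ℕ → Fin m → ℝ} {ys : ℕ → Fin p → ℝ}
    (hx : ∀ t < N, xs (t + 1) = A *ᵥ xs t + B *ᵥ us t)
    (hy : ∀ t < N, ys t = C *ᵥ xs t + D *ᵥ us t) {i j : ℕ} (h : j + i < N) :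
    ys (j + i) =
      (C * A ^ i) *ᵥ xs j + ∑ s ∈ range (i + 1), markov A B C D (i - s) *ᵥ us (j + s) := by
  have hC : C *ᵥ ∑ s ∈ range i, (A ^ (i - 1 - s) * B) *ᵥ us (j + s)
      = ∑ s ∈ range i, markov A B C D (i - s) *ᵥ us (j + s) := by
    rw [mulVec_sum]
    refine sum_congr rfl fun s hs => ?_
    have hsi := mem_range.1 hs
    rw [mulVec_mulVec, show i - s = i - 1 - s + 1 by omega, markov, Matrix.mul_assoc]
  rw [hy _ h, state_eq_sum hx h.le, mulVec_add, hC, mulVec_mulVec, sum_range_succ, Nat.sub_self,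
    markov, add_assoc]

end Dynamics

/-- Extension by zero, so that the recursions of the system can be stated on `ℕ`. -/
def natExtend {α : Type*} [Zero α] {T : ℕ} (f : Fin T → α) : ℕ → α :=
  Function.extend Fin.val f 0

theorem natExtend_apply {α : Type*} [Zero α] {T : ℕ} (f : Fin T → α) {t : ℕ} (ht : t < T) :
    natExtend f t = f ⟨t, ht⟩ :=
  Fin.val_injective.extend_apply f 0 ⟨t, ht⟩

section Explains

variable {ι : Type*} [Fintype ι] {m p T : ℕ} {A : Matrix ι ι ℝ} {B : Matrix ι (Fin m) ℝ}
  {C : Matrix (Fin p) ι ℝ} {D : Matrix (Fin p) (Fin m) ℝ}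

theorem Explains.natExtend_state {u : Fin T → Fin m → ℝ} {y : Fin T → Fin p → ℝ}
    {x : Fin (T + 1) → ι → ℝ} (hE : Explains A B C D u y x) :
    ∀ t < T, natExtend x (t + 1) = A *ᵥ natExtend x t + B *ᵥ natExtend u t := by
  intro t ht
  rw [natExtend_apply x (by omega), natExtend_apply x (by omega), natExtend_apply u ht]
  exact (hE ⟨t, ht⟩).1

theorem Explains.natExtend_output {u : Fin T → Fin m → ℝ} {y : Fin T → Fin p → ℝ}
    {x : Fin (T + 1) → ι → ℝ} (hE : Explains A B C D u y x) :
    ∀ t < T, natExtend y t = C *ᵥ natExtend x t + D *ᵥ natExtend u t := by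
  intro t ht
  rw [natExtend_apply y ht, natExtend_apply x (by omega), natExtend_apply u ht]
  exact (hE ⟨t, ht⟩).2

end Explains

section Factorization

variable {ι : Type*} [Fintype ι] [DecidableEq ι] {m p T : ℕ}
  (A : Matrix ι ι ℝ) (B : Matrix ι (Fin m) ℝ)
  (C : Matrix (Fin p) ι ℝ) (D : Matrix (Fin p) (Fin m) ℝ)

def toeplitzMat (k : ℕ) : Matrix (Fin (k + 1) × Fin p) (Fin (k + 1) × Fin m) ℝ :=
  of fun ia sb => if sb.1 ≤ ia.1 then markov A B C D ((ia.1 : ℕ) - sb.1) ia.2 sb.2 else 0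

def phiMat (k : ℕ) :
    Matrix ((Fin (k + 1) × Fin m) ⊕ (Fin (k + 1) × Fin p)) (ι ⊕ (Fin (k + 1) × Fin m)) ℝ :=
  fromBlocks 0 1 (obsMat A C k) (toeplitzMat A B C D k)

def stateBlock (x : Fin (T + 1) → ι → ℝ) (k : ℕ) : Matrix ι (Fin (T - k)) ℝ :=
  of fun i j => x ⟨(j : ℕ), by have := j.isLt; omega⟩ i

variable {A B C D}

theorem toeplitzMat_mul_hankel_apply (u : Fin T → Fin m → ℝ) {k : ℕ} (i : Fin (k + 1)) (a : Fin p)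
    (j : Fin (T - k)) :
    (toeplitzMat A B C D k * hankel u k) (i, a) j
      = (∑ s ∈ range (i + 1), markov A B C D (i - s) *ᵥ natExtend u (j + s)) a := by
  let g : ℕ → ℝ := fun s => if s ≤ i then (markov A B C D (i - s) *ᵥ natExtend u (j + s)) a else 0
  have hblock : ∀ s : Fin (k + 1),
      ∑ b, toeplitzMat A B C D k (i, a) (s, b) * hankel u k (s, b) j = g s := by
    intro s
    have hjs : (j : ℕ) + s < T := by omega
    simp only [g, toeplitzMat, hankel, of_apply, Fin.le_iff_val_le_val]
    split_ifs
    · simp [mulVec, dotProduct, natExtend_apply u hjs, add_comm]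
    · simp
  rw [mul_apply, Fintype.sum_prod_type, sum_congr rfl fun s _ => hblock s,
    Fin.sum_univ_eq_sum_range g, Finset.sum_apply]
  simp only [g]
  rw [← sum_filter]
  congr 1
  ext s
  simp only [mem_filter, mem_range]
  omega

theorem obsMat_mul_stateBlock_apply (x : Fin (T + 1) → ι → ℝ) {k : ℕ} (i : Fin (k + 1))
    (a : Fin p) (j : Fin (T - k)) :
    (obsMat A C k * stateBlock x k) (i, a) j = ((C * A ^ (i : ℕ)) *ᵥ natExtend x j) a := by
  rw [natExtend_apply x (by omega)]
  rfl

theorem hankel_eq_obsMat_mul_add_toeplitzMat_mul {u : Fin T → Fin m → ℝ} {y : Fin T → Fin p → ℝ}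
    {x : Fin (T + 1) → ι → ℝ} (hE : Explains A B C D u y x) (k : ℕ) :
    hankel y k = obsMat A C k * stateBlock x k + toeplitzMat A B C D k * hankel u k := by
  ext ⟨i, a⟩ j
  have hji : (j : ℕ) + i < T := by omega
  rw [Matrix.add_apply, obsMat_mul_stateBlock_apply, toeplitzMat_mul_hankel_apply, ← Pi.add_apply,
    ← output_eq_sum hE.natExtend_state hE.natExtend_output hji, natExtend_apply y hji]
  simp only [hankel, of_apply, add_comm]

theorem Hmat_eq_phiMat_mul_Jmat {u : Fin T → Fin m → ℝ} {y : Fin T → Fin p → ℝ}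
    {x : Fin (T + 1) → ι → ℝ} (hE : Explains A B C D u y x) (k : ℕ) :
    Hmat u y k = phiMat A B C D k * Jmat u x k := by
  rw [Hmat, phiMat, show Jmat u x k = fromRows (stateBlock x k) (hankel u k) from rfl,
    fromBlocks_mul_fromRows, Matrix.zero_mul, Matrix.one_mul, zero_add,
    ← hankel_eq_obsMat_mul_add_toeplitzMat_mul hE]

theorem phiMat_mulVecLin_injective (hobs : Observable A C) {k : ℕ} (hk : lag A C ≤ k + 1) :
    Function.Injective (phiMat A B C D k).mulVecLin :=
  mulVecLin_fromBlocks_zero_one_injective _ _ (obsMat_mulVecLin_injective hobs hk)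

end Factorization

theorem stmt8_general {ι : Type*} [Fintype ι] [DecidableEq ι] {m p T : ℕ}
    (A : Matrix ι ι ℝ) (B : Matrix ι (Fin m) ℝ)
    (C : Matrix (Fin p) ι ℝ) (D : Matrix (Fin p) (Fin m) ℝ)
    (u : Fin T → Fin m → ℝ) (y : Fin T → Fin p → ℝ) (x : Fin (T + 1) → ι → ℝ)
    (hE : Explains A B C D u y x) (hobs : Observable A C)
    (k : ℕ) (hk : max (lag A C - 1) 0 ≤ k) :
    (Jmat u x k).rank = (Hmat u y k).rank := by
  rw [Hmat_eq_phiMat_mul_Jmat hE, rank_mul_eq_right_of_injective]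
  exact phiMat_mulVecLin_injective hobs (by omega)

theorem stmt8 {ι : Type*} [Fintype ι] [DecidableEq ι] {m p T : ℕ}
    (A : Matrix ι ι ℝ) (B : Matrix ι (Fin m) ℝ)
    (C : Matrix (Fin p) ι ℝ) (D : Matrix (Fin p) (Fin m) ℝ)
    (u : Fin T → Fin m → ℝ) (y : Fin T → Fin p → ℝ) (x : Fin (T + 1) → ι → ℝ)
    (hE : Explains A B C D u y x) (hobs : Observable A C)
    (k : ℕ) (hk : max (lag A C - 1) 0 ≤ k) (hkT : k ≤ T - 1) (hT : 1 ≤ T) :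
    (Jmat u x k).rank = (Hmat u y k).rank :=
  stmt8_general A B C D u y x hE hobs k hk
end
end

section
/- Let (A,B,C,D) explain the data with state x, and suppose for some k ∈ [1,T−1] that rank J_{k−1}(x) + m = rank J_k(x) and J_k(x) does not have full row rank. Then (A,B) is not controllable. -/
/-!
Write `K_k` for the left kernel of `J_k(x)`. Padding with a zero input block embeds `K_{k-1}` into
`K_k`, and the rank hypothesis makes the dimensions equal, so every vector of `K_k` is a padded
vector of `K_{k-1}`. The state equation shows that `(ξ, η) ↦ (ξA, ξB, η)` maps `K_{k-1}` into
`K_k`; reading the image as a padded vector, the last block of `η` vanishes and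
`(ξA, ξB, η_0, …, η_{k-2})` lies in `K_{k-1}` again. Iterating, all input blocks of vectors of
`K_{k-1}` vanish, hence `ξB = 0` and `ξA` is again such a state part, so `ξ A^i B = 0` for all `i`.
As `J_k(x)` is rank deficient, `K_k ≠ 0`, and the state part of a nonzero vector of `K_k` is a
nonzero left annihilator of the controllability matrix.
-/

open Matrix
noncomputable section

/-- Controllability matrix [B AB ... A^(n-1)B]. -/
def ctrbMat {ι : Type*} [Fintype ι] [DecidableEq ι] {m : ℕ}
    (A : Matrix ι ι ℝ) (B : Matrix ι (Fin m) ℝ) :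
    Matrix ι (Fin (Fintype.card ι) × Fin m) ℝ :=
  Matrix.of fun i jk => (A ^ (jk.1 : ℕ) * B) i jk.2

/-- (A,B) is controllable iff the controllability matrix has full (row) rank n. -/
def Controllable {ι : Type*} [Fintype ι] [DecidableEq ι] {m : ℕ}
    (A : Matrix ι ι ℝ) (B : Matrix ι (Fin m) ℝ) : Prop :=
  (ctrbMat A B).rank = Fintype.card ι

namespace Matrix

variable {R C : Type*} [Fintype R] [Fintype C]

abbrev leftKer (M : Matrix R C ℝ) : Submodule ℝ (R → ℝ) := LinearMap.ker M.vecMulLinear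

theorem finrank_leftKer_add_rank (M : Matrix R C ℝ) :
    Module.finrank ℝ M.leftKer + M.rank = Fintype.card R := by
  have h := LinearMap.finrank_range_add_finrank_ker Mᵀ.mulVecLin
  rw [Matrix.mulVecLin_transpose, Module.finrank_pi] at h
  rw [← Matrix.rank_transpose M, Matrix.rank, Matrix.mulVecLin_transpose, add_comm]
  exact h

theorem rank_ne_card_iff_exists_vecMul_eq_zero (M : Matrix R C ℝ) :
    M.rank ≠ Fintype.card R ↔ ∃ v ≠ 0, v ᵥ* M = 0 := by
  have h := M.finrank_leftKer_add_rank
  rw [show M.rank ≠ Fintype.card R ↔ M.leftKer ≠ ⊥ by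
    rw [Ne, Ne, ← Submodule.finrank_eq_zero]; omega, Submodule.ne_bot_iff]
  simp only [LinearMap.mem_ker, vecMulLinear_apply, and_comm]

end Matrix

section Controllability

variable {ι : Type*} [Fintype ι] [DecidableEq ι] {m : ℕ}

theorem not_controllable_of_vecMul_pow_mul_eq_zero {A : Matrix ι ι ℝ} {B : Matrix ι (Fin m) ℝ}
    {ξ : ι → ℝ} (hξ : ξ ≠ 0) (h : ∀ i : ℕ, ξ ᵥ* (A ^ i * B) = 0) : ¬ Controllable A B := by
  intro hC
  have : ∃ v ≠ 0, v ᵥ* ctrbMat A B = 0 := ⟨ξ, hξ, funext fun ⟨i, b⟩ => congrFun (h i) b⟩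
  exact (ctrbMat A B).rank_ne_card_iff_exists_vecMul_eq_zero.mpr this hC

end Controllability

section LeftKernel

variable {ι : Type*} {m T k : ℕ}

def inputPart {κ : Type*} (w : ι ⊕ κ × Fin m → ℝ) (i : κ) : Fin m → ℝ :=
  fun b => w (.inr (i, b))

theorem mem_leftKer_Jmat_iff [Fintype ι] (u : Fin T → Fin m → ℝ) (x : Fin (T + 1) → ι → ℝ)
    (w : ι ⊕ Fin (k + 1) × Fin m → ℝ) :
    w ∈ (Jmat u x k).leftKer ↔ ∀ j : Fin (T - k),
      (w ∘ Sum.inl) ⬝ᵥ x ⟨j, by omega⟩ + ∑ i : Fin (k + 1), inputPart w i ⬝ᵥ u ⟨i + j, by omega⟩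
        = 0 := by
  simp only [LinearMap.mem_ker, vecMulLinear_apply, funext_iff, Pi.zero_apply, vecMul, dotProduct,
    Fintype.sum_sum_type, Fintype.sum_prod_type, Jmat, hankel, fromRows, of_apply]
  rfl

variable (ι m k) in
def castSuccIndex : ι ⊕ Fin (k + 1) × Fin m → ι ⊕ Fin (k + 2) × Fin m :=
  Sum.map id (Prod.map Fin.castSucc id)

theorem castSuccIndex_injective : (castSuccIndex ι m k).Injective :=
  Function.injective_id.sumMap (Fin.castSucc_injective _ |>.prodMap Function.injective_id)

variable (ι m k) in
/-- `w ↦ (w, 0)`, realizing `leftker J_k × {0}^m ⊆ leftker J_{k+1}`. -/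
def padZero : (ι ⊕ Fin (k + 1) × Fin m → ℝ) →ₗ[ℝ] ι ⊕ Fin (k + 2) × Fin m → ℝ :=
  Function.ExtendByZero.linearMap ℝ (castSuccIndex ι m k)

theorem padZero_injective : Function.Injective (padZero ι m k) :=
  Function.extend_injective castSuccIndex_injective (0 : ι ⊕ Fin (k + 2) × Fin m → ℝ)

theorem padZero_comp_inl (w : ι ⊕ Fin (k + 1) × Fin m → ℝ) :
    padZero ι m k w ∘ Sum.inl = w ∘ Sum.inl :=
  funext fun a => castSuccIndex_injective.extend_apply w 0 (.inl a)

theorem inputPart_padZero (w : ι ⊕ Fin (k + 1) × Fin m → ℝ) :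
    inputPart (padZero ι m k w) = Fin.snoc (α := fun _ => Fin m → ℝ) (inputPart w) 0 := by
  ext i b
  induction i using Fin.lastCases with
  | last =>
    simp only [Fin.snoc_last, Pi.zero_apply]
    refine Function.extend_apply' _ _ _ ?_
    rintro ⟨_ | ⟨i, _⟩, h⟩ <;> simp_all [castSuccIndex, Fin.castSucc_ne_last]
  | cast i =>
    rw [Fin.snoc_castSucc]
    exact castSuccIndex_injective.extend_apply w 0 (.inr (i, b))

theorem padZero_mem_leftKer [Fintype ι] {u : Fin T → Fin m → ℝ} {x : Fin (T + 1) → ι → ℝ}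
    {w : ι ⊕ Fin (k + 1) × Fin m → ℝ} (hw : w ∈ (Jmat u x k).leftKer) :
    padZero ι m k w ∈ (Jmat u x (k + 1)).leftKer := by
  rw [mem_leftKer_Jmat_iff] at hw ⊢
  intro j
  simpa [padZero_comp_inl, inputPart_padZero, Fin.sum_univ_castSucc] using hw ⟨j, by omega⟩

end LeftKernel

section Shift

variable {ι : Type*} [Fintype ι] {m p T k : ℕ}

/-- Right multiplication by the shift matrix `𝒜 = [[A, B, 0], [0, 0, I], [0, 0, 0]]`, keeping the
last input block instead of discarding it. -/
def shiftRow (A : Matrix ι ι ℝ) (B : Matrix ι (Fin m) ℝ) (w : ι ⊕ Fin (k + 1) × Fin m → ℝ) :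
    ι ⊕ Fin (k + 2) × Fin m → ℝ :=
  Sum.elim ((w ∘ Sum.inl) ᵥ* A)
    fun ib => Fin.cons (α := fun _ => Fin m → ℝ) ((w ∘ Sum.inl) ᵥ* B) (inputPart w) ib.1 ib.2

theorem shiftRow_comp_inl (A : Matrix ι ι ℝ) (B : Matrix ι (Fin m) ℝ)
    (w : ι ⊕ Fin (k + 1) × Fin m → ℝ) : shiftRow A B w ∘ Sum.inl = (w ∘ Sum.inl) ᵥ* A :=
  rfl

theorem inputPart_shiftRow (A : Matrix ι ι ℝ) (B : Matrix ι (Fin m) ℝ)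
    (w : ι ⊕ Fin (k + 1) × Fin m → ℝ) :
    inputPart (shiftRow A B w) =
      Fin.cons (α := fun _ => Fin m → ℝ) ((w ∘ Sum.inl) ᵥ* B) (inputPart w) :=
  rfl

theorem shiftRow_mem_leftKer {A : Matrix ι ι ℝ} {B : Matrix ι (Fin m) ℝ}
    {C : Matrix (Fin p) ι ℝ} {D : Matrix (Fin p) (Fin m) ℝ} {u : Fin T → Fin m → ℝ}
    {y : Fin T → Fin p → ℝ} {x : Fin (T + 1) → ι → ℝ} (hE : Explains A B C D u y x)
    {w : ι ⊕ Fin (k + 1) × Fin m → ℝ} (hw : w ∈ (Jmat u x k).leftKer) :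
    shiftRow A B w ∈ (Jmat u x (k + 1)).leftKer := by
  rw [mem_leftKer_Jmat_iff] at hw ⊢
  intro j
  have hx : x ⟨j + 1, by omega⟩ = A *ᵥ x ⟨j, by omega⟩ + B *ᵥ u ⟨j, by omega⟩ :=
    (hE ⟨j, by omega⟩).1
  have hu : ∀ i : Fin (k + 1), u ⟨i.succ + j, by omega⟩ = u ⟨i + (j + 1), by omega⟩ :=
    fun i => congrArg u (Fin.ext (by simp only [Fin.val_succ]; omega))
  have := hw ⟨j + 1, by omega⟩
  simp only [hx, dotProduct_add, dotProduct_mulVec] at this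
  rw [shiftRow_comp_inl, inputPart_shiftRow, Fin.sum_univ_succ, ← add_assoc]
  simpa only [Fin.cons_zero, Fin.cons_succ, hu, Fin.val_zero, zero_add] using this

end Shift

section RankStep

variable {ι : Type*} [Fintype ι] {m p T k : ℕ} {u : Fin T → Fin m → ℝ} {x : Fin (T + 1) → ι → ℝ}

theorem card_sum_fin_prod_fin :
    Fintype.card (ι ⊕ Fin (k + 1) × Fin m) = Fintype.card ι + (k + 1) * m := by
  simp [Fintype.card_sum, Fintype.card_prod]

theorem leftKer_Jmat_succ_eq_map_padZero
    (hstep : (Jmat u x k).rank + m = (Jmat u x (k + 1)).rank) :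
    (Jmat u x (k + 1)).leftKer = (Jmat u x k).leftKer.map (padZero ι m k) := by
  have hk := (Jmat u x k).finrank_leftKer_add_rank
  have hk₁ := (Jmat u x (k + 1)).finrank_leftKer_add_rank
  rw [card_sum_fin_prod_fin] at hk hk₁
  refine (Submodule.eq_of_le_of_finrank_eq ?_ ?_).symm
  · rintro _ ⟨w, hw, rfl⟩
    exact padZero_mem_leftKer hw
  · rw [← (Submodule.equivMapOfInjective _ padZero_injective _).finrank_eq]
    linarith

variable {A : Matrix ι ι ℝ} {B : Matrix ι (Fin m) ℝ} {C : Matrix (Fin p) ι ℝ}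
  {D : Matrix (Fin p) (Fin m) ℝ} {y : Fin T → Fin p → ℝ}

theorem exists_mem_leftKer_padZero_eq_shiftRow (hE : Explains A B C D u y x)
    (hstep : (Jmat u x k).rank + m = (Jmat u x (k + 1)).rank)
    {w : ι ⊕ Fin (k + 1) × Fin m → ℝ} (hw : w ∈ (Jmat u x k).leftKer) :
    ∃ w' ∈ (Jmat u x k).leftKer, w' ∘ Sum.inl = (w ∘ Sum.inl) ᵥ* A ∧
      Fin.snoc (α := fun _ => Fin m → ℝ) (inputPart w') 0 =
        Fin.cons (α := fun _ => Fin m → ℝ) ((w ∘ Sum.inl) ᵥ* B) (inputPart w) := by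
  have h := shiftRow_mem_leftKer hE hw
  rw [leftKer_Jmat_succ_eq_map_padZero hstep] at h
  obtain ⟨w', hw', hpad⟩ := h
  refine ⟨w', hw', ?_, ?_⟩
  · rw [← padZero_comp_inl, hpad, shiftRow_comp_inl]
  · rw [← inputPart_padZero, hpad, inputPart_shiftRow]

theorem inputPart_eq_zero_of_mem_leftKer (hE : Explains A B C D u y x)
    (hstep : (Jmat u x k).rank + m = (Jmat u x (k + 1)).rank) (i : Fin (k + 1)) :
    ∀ w ∈ (Jmat u x k).leftKer, inputPart w i = 0 := by
  induction i using Fin.reverseInduction with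
  | last =>
    intro w hw
    obtain ⟨w', -, -, h⟩ := exists_mem_leftKer_padZero_eq_shiftRow hE hstep hw
    have := congrFun h (Fin.last (k + 1))
    rwa [Fin.snoc_last, ← Fin.succ_last, Fin.cons_succ, eq_comm] at this
  | cast i ih =>
    intro w hw
    obtain ⟨w', hw', -, h⟩ := exists_mem_leftKer_padZero_eq_shiftRow hE hstep hw
    have := congrFun h i.succ.castSucc
    rwa [Fin.snoc_castSucc, ih w' hw', ← Fin.succ_castSucc, Fin.cons_succ, eq_comm] at this

theorem vecMul_pow_mul_eq_zero_of_mem_leftKer [DecidableEq ι] (hE : Explains A B C D u y x)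
    (hstep : (Jmat u x k).rank + m = (Jmat u x (k + 1)).rank) (i : ℕ) :
    ∀ w ∈ (Jmat u x k).leftKer, (w ∘ Sum.inl) ᵥ* (A ^ i * B) = 0 := by
  induction i with
  | zero =>
    intro w hw
    obtain ⟨w', hw', -, h⟩ := exists_mem_leftKer_padZero_eq_shiftRow hE hstep hw
    have := congrFun h 0
    rw [← Fin.castSucc_zero, Fin.snoc_castSucc, inputPart_eq_zero_of_mem_leftKer hE hstep 0 w' hw',
      Fin.castSucc_zero, Fin.cons_zero] at this
    rw [pow_zero, Matrix.one_mul, ← this]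
  | succ i ih =>
    intro w hw
    obtain ⟨w', hw', hA, -⟩ := exists_mem_leftKer_padZero_eq_shiftRow hE hstep hw
    rw [pow_succ', Matrix.mul_assoc, ← vecMul_vecMul, ← hA]
    exact ih w' hw'

end RankStep

theorem stmt10_general {ι : Type*} [Fintype ι] [DecidableEq ι] {m p T : ℕ}
    (A : Matrix ι ι ℝ) (B : Matrix ι (Fin m) ℝ)
    (C : Matrix (Fin p) ι ℝ) (D : Matrix (Fin p) (Fin m) ℝ)
    (u : Fin T → Fin m → ℝ) (y : Fin T → Fin p → ℝ) (x : Fin (T + 1) → ι → ℝ)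
    (hE : Explains A B C D u y x)
    (k : ℕ) (hk1 : 1 ≤ k)
    (hstep : (Jmat u x (k - 1)).rank + m = (Jmat u x k).rank)
    (hnotfull : (Jmat u x k).rank ≠ Fintype.card ι + (k + 1) * m) :
    ¬ Controllable A B := by
  obtain ⟨k, rfl⟩ : ∃ k', k = k' + 1 := ⟨k - 1, by omega⟩
  rw [Nat.add_sub_cancel] at hstep
  rw [← card_sum_fin_prod_fin, rank_ne_card_iff_exists_vecMul_eq_zero] at hnotfull
  obtain ⟨v, hv0, hv⟩ := hnotfull
  have hvK : v ∈ (Jmat u x (k + 1)).leftKer := hv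
  rw [leftKer_Jmat_succ_eq_map_padZero hstep] at hvK
  obtain ⟨w, hw, rfl⟩ := hvK
  have hξ : w ∘ Sum.inl ≠ 0 := by
    refine fun hξ => hv0 ?_
    have hw0 : w = 0 := by
      ext (a | ⟨i, b⟩)
      · exact congrFun hξ a
      · exact congrFun (inputPart_eq_zero_of_mem_leftKer hE hstep i w hw) b
    rw [hw0, map_zero]
  exact not_controllable_of_vecMul_pow_mul_eq_zero hξ
    fun i => vecMul_pow_mul_eq_zero_of_mem_leftKer hE hstep i w hw

theorem stmt10 {ι : Type*} [Fintype ι] [DecidableEq ι] {m p T : ℕ}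
    (A : Matrix ι ι ℝ) (B : Matrix ι (Fin m) ℝ)
    (C : Matrix (Fin p) ι ℝ) (D : Matrix (Fin p) (Fin m) ℝ)
    (u : Fin T → Fin m → ℝ) (y : Fin T → Fin p → ℝ) (x : Fin (T + 1) → ι → ℝ)
    (hE : Explains A B C D u y x)
    (k : ℕ) (hk1 : 1 ≤ k) (hkT : k ≤ T - 1) (hT : 1 ≤ T)
    (hstep : (Jmat u x (k - 1)).rank + m = (Jmat u x k).rank)
    (hnotfull : (Jmat u x k).rank ≠ Fintype.card ι + (k + 1) * m) :
    ¬ Controllable A B :=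
  stmt10_general A B C D u y x hE k hk1 hstep hnotfull
end
end

section
/- In the setting of the augmented pair (C̄,Ā) = ([C 0], [[A,ζC'],[0,A']]) with ℓ̄ = ℓ(C,A) + n': if ζ' ∈ ℝ^{n'} satisfies C'(A')^i ζ' = 0 for i ∈ [0,n'−2] and C'(A')^{n'−1} ζ' ≠ 0, then the vector [0; ζ'] ∈ ℝ^{n+n'} satisfies C̄ Ā^i [0; ζ'] = 0 for all i ∈ [0, ℓ̄−2] and C̄ Ā^{ℓ̄−1} [0; ζ'] ≠ 0. -/
/-
The bottom block of `Ā ^ i [0; ζ']` is `A' ^ i ζ'`, and the top block is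
`∑_{j < i} s_j A ^ (i - 1 - j) ζ` with the scalars `s_j = C' A' ^ j ζ'`, because the coupling
`ζ C'` has rank one. Hence `C̄ Ā ^ i [0; ζ']` is the convolution of `s` with `x_k = C A ^ k ζ`.
The sequence `s` vanishes below `n' - 1` and `x` below `ℓ - 1`, so the convolution vanishes up to
index `ℓ + n' - 2` and at `ℓ + n' - 1` it is the single product `s_{n'-1} x_{ℓ-1} ≠ 0`. Both indices are meaningful: `ℓ ≥ 1` since `C ≠ 0` (the ranks of the
observability matrices are bounded, so the infimum defining the lag is attained), and `n' ≥ 1`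
since `ζ' ≠ 0`.
-/
open Matrix
noncomputable section

theorem Matrix.mulVec_eq_zero_of_rank_eq_zero {m n K : Type*} [Fintype m] [Fintype n] [Field K]
    {M : Matrix m n K} (h : M.rank = 0) (v : n → K) : M *ᵥ v = 0 := by
  rw [Matrix.rank, Submodule.finrank_eq_zero, LinearMap.range_eq_bot] at h
  exact LinearMap.congr_fun h v

section Observability

variable {ι : Type*} [Fintype ι] [DecidableEq ι] {p : ℕ} (A : Matrix ι ι ℝ) (C : Matrix (Fin p) ι ℝ)

theorem obsRank_le_obsRank_succ (k : ℕ) : obsRank A C k ≤ obsRank A C (k + 1) := by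
  cases k with
  | zero => exact Nat.zero_le _
  | succ k =>
    have hsub : obsMat A C k = (obsMat A C (k + 1)).submatrix (fun ir => (ir.1.castSucc, ir.2)) id :=
      rfl
    change (obsMat A C k).rank ≤ (obsMat A C (k + 1)).rank
    rw [hsub]
    exact Matrix.rank_submatrix_le _ _ _

theorem obsRank_le_card (k : ℕ) : obsRank A C k ≤ Fintype.card ι := by
  cases k with
  | zero => exact Nat.zero_le _
  | succ k => exact (obsMat A C k).rank_le_card_width

theorem exists_obsRank_succ_eq : ∃ k, obsRank A C (k + 1) = obsRank A C k := by
  by_contra! h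
  have hgrow : ∀ k, k ≤ obsRank A C k := by
    intro k
    induction k with
    | zero => exact Nat.zero_le _
    | succ k ih => have := obsRank_le_obsRank_succ A C k; have := h k; omega
  have := hgrow (Fintype.card ι + 1)
  have := obsRank_le_card A C (Fintype.card ι + 1)
  omega

theorem obsRank_lag_succ : obsRank A C (lag A C + 1) = obsRank A C (lag A C) :=
  Nat.sInf_mem (exists_obsRank_succ_eq A C)

theorem lag_pos {C : Matrix (Fin p) ι ℝ} (hC : C ≠ 0) : 0 < lag A C := by
  refine Nat.pos_of_ne_zero fun h0 => hC ?_
  have hrank : (obsMat A C 0).rank = 0 := by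
    have := obsRank_lag_succ A C
    rwa [h0] at this
  ext r j
  simpa [obsMat] using congrFun (Matrix.mulVec_eq_zero_of_rank_eq_zero hrank (Pi.single j 1)) (0, r)

end Observability

open Finset

theorem sum_range_smul_sub_eq_zero {R M : Type*} [Semiring R] [AddCommMonoid M] [Module R M]
    {s : ℕ → R} {x : ℕ → M} {a b i : ℕ} (hs : ∀ j < a, s j = 0) (hx : ∀ k < b, x k = 0)
    (hi : i ≤ a + b) : ∑ j ∈ range i, s j • x (i - 1 - j) = 0 := by
  refine sum_eq_zero fun j hj => ?_
  rcases lt_or_ge j a with hja | hja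
  · rw [hs j hja, zero_smul]
  · rw [hx _ (by grind), smul_zero]

theorem sum_range_smul_sub_eq_single {R M : Type*} [Semiring R] [AddCommMonoid M] [Module R M]
    {s : ℕ → R} {x : ℕ → M} {a b : ℕ} (hs : ∀ j < a, s j = 0) (hx : ∀ k < b, x k = 0) :
    ∑ j ∈ range (a + b + 1), s j • x (a + b + 1 - 1 - j) = s a • x b := by
  rw [sum_eq_single_of_mem a (by grind)]
  · congr 2
    omega
  · intro j hj hja
    rcases lt_or_gt_of_ne hja with hja | hja
    · rw [hs j hja, zero_smul]
    · rw [hx _ (by grind), smul_zero]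

namespace Matrix

variable {R l m n : Type*} [Fintype m] [Fintype n] [DecidableEq m] [DecidableEq n]

theorem fromBlocks_zero_pow_mulVec_sumElim_zero [Semiring R] (A : Matrix m m R)
    (B : Matrix m n R) (D : Matrix n n R) (w : n → R) (i : ℕ) :
    fromBlocks A B 0 D ^ i *ᵥ Sum.elim 0 w =
      Sum.elim (∑ j ∈ range i, A ^ (i - 1 - j) *ᵥ B *ᵥ D ^ j *ᵥ w) (D ^ i *ᵥ w) := by
  induction i with
  | zero => simp
  | succ i ih =>
    rw [pow_succ', ← mulVec_mulVec, ih, fromBlocks_mulVec, Sum.elim_comp_inl, Sum.elim_comp_inr,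
      zero_mulVec, zero_add, mulVec_mulVec _ D, ← pow_succ', sum_range_succ, mulVec_sum]
    congr 2
    · refine sum_congr rfl fun j hj => ?_
      rw [mulVec_mulVec, ← pow_succ']
      congr 3
      grind
    · simp

theorem fromCols_zero_mul_fromBlocks_vecMulVec_pow_mulVec [CommSemiring R] [Fintype l]
    [DecidableEq l] (C : Matrix l m R) (A : Matrix m m R) (ζ : m → R) (c : n → R)
    (D : Matrix n n R) (w : n → R) (i : ℕ) :
    (fromCols C (0 : Matrix l n R) * fromBlocks A (vecMulVec ζ c) 0 D ^ i) *ᵥ Sum.elim 0 w =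
      ∑ j ∈ range i, (c ⬝ᵥ D ^ j *ᵥ w) • (C * A ^ (i - 1 - j)) *ᵥ ζ := by
  rw [← mulVec_mulVec, fromBlocks_zero_pow_mulVec_sumElim_zero, fromCols_mulVec_sumElim,
    zero_mulVec, add_zero, mulVec_sum]
  refine sum_congr rfl fun j _ => ?_
  rw [vecMulVec_mulVec, op_smul_eq_smul, mulVec_smul, mulVec_smul, mulVec_mulVec]

end Matrix

theorem stmt12_general {n n' p : ℕ}
    (A : Matrix (Fin n) (Fin n) ℝ) (C : Matrix (Fin p) (Fin n) ℝ)
    (ζ : Fin n → ℝ)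
    (hz1 : ∀ i, i + 2 ≤ lag A C → (C * A ^ i).mulVec ζ = 0)
    (hz2 : (C * A ^ (lag A C - 1)).mulVec ζ ≠ 0)
    (A' : Matrix (Fin n') (Fin n') ℝ) (C' : Matrix (Fin 1) (Fin n') ℝ)
    (ζ' : Fin n' → ℝ)
    (hz1' : ∀ i, i + 2 ≤ n' → (C' * A' ^ i).mulVec ζ' = 0)
    (hz2' : (C' * A' ^ (n' - 1)).mulVec ζ' ≠ 0) :
    (∀ i, i + 2 ≤ lag A C + n' →
      (Matrix.fromCols C (0 : Matrix (Fin p) (Fin n') ℝ) *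
          (Matrix.fromBlocks A (Matrix.of fun i j => ζ i * C' 0 j) 0 A') ^ i).mulVec
        (Sum.elim (fun _ => (0 : ℝ)) ζ') = 0) ∧
    (Matrix.fromCols C (0 : Matrix (Fin p) (Fin n') ℝ) *
        (Matrix.fromBlocks A (Matrix.of fun i j => ζ i * C' 0 j) 0 A') ^
          (lag A C + n' - 1)).mulVec
      (Sum.elim (fun _ => (0 : ℝ)) ζ') ≠ 0 := by
  have hℓ : 0 < lag A C := lag_pos A fun hC => hz2 (by simp [hC])
  have hn' : 0 < n' := Nat.pos_of_ne_zero fun h => hz2' (by subst h; simp [Subsingleton.elim ζ' 0])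
  have hrow : ∀ j, (C' * A' ^ j) *ᵥ ζ' = fun _ => C' 0 ⬝ᵥ A' ^ j *ᵥ ζ' := fun j => by
    ext r
    rw [Fin.eq_zero r, ← mulVec_mulVec]
    rfl
  have hs : ∀ j < n' - 1, C' 0 ⬝ᵥ A' ^ j *ᵥ ζ' = 0 := fun j hj =>
    congrFun ((hrow j).symm.trans (hz1' j (by omega))) 0
  have hx : ∀ k < lag A C - 1, (C * A ^ k) *ᵥ ζ = 0 := fun k hk => hz1 k (by omega)
  have hs_ne : C' 0 ⬝ᵥ A' ^ (n' - 1) *ᵥ ζ' ≠ 0 := fun h => hz2' (by rw [hrow, h]; rfl)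
  have hlast : lag A C + n' - 1 = n' - 1 + (lag A C - 1) + 1 := by omega
  refine ⟨fun i hi => ?_, ?_⟩
  · exact (fromCols_zero_mul_fromBlocks_vecMulVec_pow_mulVec C A ζ (C' 0) A' ζ' i).trans
      (sum_range_smul_sub_eq_zero hs hx (by omega))
  · rw [hlast]
    exact ((fromCols_zero_mul_fromBlocks_vecMulVec_pow_mulVec C A ζ (C' 0) A' ζ' _).trans
      (sum_range_smul_sub_eq_single hs hx)).trans_ne (smul_ne_zero hs_ne hz2)

theorem stmt12 {n n' p : ℕ} (hn : 1 ≤ n) (hn' : 1 ≤ n')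
    (A : Matrix (Fin n) (Fin n) ℝ) (C : Matrix (Fin p) (Fin n) ℝ)
    (hobs : Observable A C)
    (ζ : Fin n → ℝ)
    (hz1 : ∀ i, i + 2 ≤ lag A C → (C * A ^ i).mulVec ζ = 0)
    (hz2 : (C * A ^ (lag A C - 1)).mulVec ζ ≠ 0)
    (A' : Matrix (Fin n') (Fin n') ℝ) (C' : Matrix (Fin 1) (Fin n') ℝ)
    (hobs' : Observable A' C')
    (ζ' : Fin n' → ℝ)
    (hz1' : ∀ i, i + 2 ≤ n' → (C' * A' ^ i).mulVec ζ' = 0)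
    (hz2' : (C' * A' ^ (n' - 1)).mulVec ζ' ≠ 0) :
    (∀ i, i + 2 ≤ lag A C + n' →
      (Matrix.fromCols C (0 : Matrix (Fin p) (Fin n') ℝ) *
          (Matrix.fromBlocks A (Matrix.of fun i j => ζ i * C' 0 j) 0 A') ^ i).mulVec
        (Sum.elim (fun _ => (0 : ℝ)) ζ') = 0) ∧
    (Matrix.fromCols C (0 : Matrix (Fin p) (Fin n') ℝ) *
        (Matrix.fromBlocks A (Matrix.of fun i j => ζ i * C' 0 j) 0 A') ^
          (lag A C + n' - 1)).mulVec
      (Sum.elim (fun _ => (0 : ℝ)) ζ') ≠ 0 :=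
  stmt12_general A C ζ hz1 hz2 A' C' ζ' hz1' hz2'
end
end

section
/- Let x_{[0,T]} ∈ ℝ^{n×(T+1)}. There exists a system (A,B,C,D) explaining the data (u,y) with state x (i.e., x_{t+1}=Ax_t+Bu_t and y_t=Cx_t+Du_t for all t ∈ [0,T−1]) if and only if rowspace([x_{[1,T]}; y_{[0,T−1]}]) ⊆ rowspace([x_{[0,T−1]}; u_{[0,T−1]}]). -/
open Matrix
noncomputable section

theorem rowSpace_le_iff_exists_mul_eq {ι ι' κ : Type*} [Fintype ι']
    (M : Matrix ι κ ℝ) (N : Matrix ι' κ ℝ) :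
    rowSpace M ≤ rowSpace N ↔ ∃ K : Matrix ι ι' ℝ, M = K * N := by
  simp only [rowSpace, Submodule.span_le, Set.range_subset_iff, SetLike.mem_coe,
    Submodule.mem_span_range_iff_exists_fun, ← vecMul_eq_sum]
  rw [Classical.skolem]
  exact exists_congr fun K => funext_iff.symm.trans eq_comm

theorem of_eq_mul_add_mul_iff {R ι κ₁ κ₂ τ : Type*} [NonUnitalNonAssocSemiring R]
    [Fintype κ₁] [Fintype κ₂]
    (v : τ → ι → R) (w : τ → κ₁ → R) (z : τ → κ₂ → R)
    (A : Matrix ι κ₁ R) (B : Matrix ι κ₂ R) :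
    (of fun i t => v t i) = A * (of fun j t => w t j) + B * (of fun k t => z t k) ↔
      ∀ t, v t = A *ᵥ w t + B *ᵥ z t := by
  simp only [← Matrix.ext_iff, funext_iff, Matrix.add_apply, mulVec, dotProduct, of_apply,
    Pi.add_apply]
  exact forall_comm

theorem explains_iff_eq_fromBlocks_mul {ι : Type*} [Fintype ι] {m p T : ℕ}
    (A : Matrix ι ι ℝ) (B : Matrix ι (Fin m) ℝ)
    (C : Matrix (Fin p) ι ℝ) (D : Matrix (Fin p) (Fin m) ℝ)
    (u : Fin T → Fin m → ℝ) (y : Fin T → Fin p → ℝ) (x : Fin (T + 1) → ι → ℝ) :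
    Explains A B C D u y x ↔
      fromRows (of fun i (t : Fin T) => x t.succ i) (of fun a t => y t a) =
        fromBlocks A B C D * fromRows (of fun i (t : Fin T) => x t.castSucc i)
          (of fun a t => u t a) := by
  rw [fromBlocks_mul_fromRows, fromRows_ext_iff,
    of_eq_mul_add_mul_iff (fun t => x t.succ) (fun t => x t.castSucc) u,
    of_eq_mul_add_mul_iff y (fun t => x t.castSucc) u]
  exact forall_and

theorem exists_fromBlocks_iff {α l m n o : Type*} {P : Matrix (n ⊕ o) (l ⊕ m) α → Prop} :
    (∃ A B C D, P (fromBlocks A B C D)) ↔ ∃ M, P M :=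
  ⟨fun ⟨_, _, _, _, h⟩ => ⟨_, h⟩, fun ⟨M, h⟩ =>
    ⟨M.toBlocks₁₁, M.toBlocks₁₂, M.toBlocks₂₁, M.toBlocks₂₂, (fromBlocks_toBlocks M).symm ▸ h⟩⟩

theorem stmt19 {n m p T : ℕ}
    (u : Fin T → Fin m → ℝ) (y : Fin T → Fin p → ℝ)
    (x : Fin (T + 1) → Fin n → ℝ) :
    (∃ (A : Matrix (Fin n) (Fin n) ℝ) (B : Matrix (Fin n) (Fin m) ℝ)
       (C : Matrix (Fin p) (Fin n) ℝ) (D : Matrix (Fin p) (Fin m) ℝ),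
      Explains A B C D u y x) ↔
    rowSpace (Matrix.fromRows
        (Matrix.of fun i (t : Fin T) => x t.succ i)
        (Matrix.of fun (a : Fin p) (t : Fin T) => y t a)) ≤
      rowSpace (Matrix.fromRows
        (Matrix.of fun i (t : Fin T) => x t.castSucc i)
        (Matrix.of fun (a : Fin m) (t : Fin T) => u t a)) := by
  simp only [explains_iff_eq_fromBlocks_mul, rowSpace_le_iff_exists_mul_eq]
  exact exists_fromBlocks_iff (P := fun K => _ = K * fromRows _ _)
end
end
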